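/- arXiv:2602.23503 — 2 statements merged into one kernel-verified Lean document; each statement's English description precedes it below -/
import Mathlib

section
/- Let μ be any absolutely continuous probability distribution over N × N real matrices. Then with probability 1, a matrix M drawn from μ has spiky rank at least N/2. -/
open Matrix MeasureTheory

/-- A blocky matrix: its support is a disjoint union of combinatorial rectangles,
with value 1 on the support and 0 elsewhere. -/
def IsBlocky {F : Type*} [Field F] {m n : Type*} (M : Matrix m n F) : Prop :=
  ∃ (k : ℕ) (S : Fin k → Finset m) (T : Fin k → Finset n),
    (∀ a b, a ≠ b → Disjoint (S a) (S b)) ∧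
    (∀ a b, a ≠ b → Disjoint (T a) (T b)) ∧
    (∀ i j, (∃ l, i ∈ S l ∧ j ∈ T l) → M i j = 1) ∧
    (∀ i j, (¬ ∃ l, i ∈ S l ∧ j ∈ T l) → M i j = 0)

/-- A spiky matrix: the entrywise product of a blocky matrix and a rank-one matrix. -/
def IsSpiky {F : Type*} [Field F] {m n : Type*} (M : Matrix m n F) : Prop :=
  ∃ (B : Matrix m n F) (u : m → F) (v : n → F),
    IsBlocky B ∧ ∀ i j, M i j = B i j * (u i * v j)

/-- The spiky rank: minimum number of spiky matrices summing to `M`. -/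
noncomputable def spikyRank {F : Type*} [Field F] {m n : Type*} (M : Matrix m n F) : ℕ :=
  sInf {r | ∃ f : Fin r → Matrix m n F, (∀ i, IsSpiky (f i)) ∧ ∑ i, f i = M}

/-- The blocky rank: minimum number of blocky matrices whose linear combination equals `M`. -/
noncomputable def blockyRank {F : Type*} [Field F] {m n : Type*} (M : Matrix m n F) : ℕ :=
  sInf {r | ∃ (f : Fin r → Matrix m n F) (c : Fin r → F),
    (∀ i, IsBlocky (f i)) ∧ ∑ i, c i • f i = M}

/-- Sparsity: the number of nonzero entries of a matrix. -/
noncomputable def matSparsity {F : Type*} [Zero F] {m n : Type*} (M : Matrix m n F) : ℕ :=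
  {p : m × n | M p.1 p.2 ≠ 0}.ncard

/-- Rank-`r` rigidity: minimum number of entries that must be changed to bring the rank
down to `r`. -/
noncomputable def rigidity {F : Type*} [Field F] {N : ℕ}
    (M : Matrix (Fin N) (Fin N) F) (r : ℕ) : ℕ :=
  sInf {s | ∃ A C : Matrix (Fin N) (Fin N) F, M = A + C ∧ A.rank ≤ r ∧ matSparsity C ≤ s}

/-- Sign spiky rank: minimum spiky rank over real matrices with the same sign pattern. -/
noncomputable def signSpikyRank {m n : Type*} (M : Matrix m n ℝ) : ℕ :=
  sInf {r | ∃ A : Matrix m n ℝ,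
    (∀ i j, Real.sign (A i j) = Real.sign (M i j)) ∧ spikyRank A ≤ r}

/-- Blocky cover number: minimum number of blocky matrices whose supports' union is
exactly the set of 1-entries of the Boolean matrix `M`. -/
noncomputable def blockyCover {m n : Type*} (M : Matrix m n ℝ) : ℕ :=
  sInf {k | ∃ f : Fin k → Matrix m n ℝ, (∀ l, IsBlocky (f l)) ∧
    ∀ i j, M i j = 1 ↔ ∃ l, f l i j = 1}


/-! A matrix of spiky rank `r` is a sum `∑ₗ Pₗ ∘ (uₗ vₗᵀ)` with 0/1 patterns `Pₗ`, so it lies in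
the range of a polynomial map from `(ℝᴺ × ℝᴺ)ʳ` to `ℝ^{N×N}`. When `2rN < N²` this range is
Lebesgue-null, being the differentiable image of a space of smaller dimension. There are countably
many `(r, P)`, and `μ ≪ volume` carries nullity to `μ`. -/

open Set Module

theorem LinearMap.exists_surjective_of_finrank_le {K V W : Type*} [Field K]
    [AddCommGroup V] [Module K V] [FiniteDimensional K V]
    [AddCommGroup W] [Module K W] [FiniteDimensional K W]
    (h : finrank K V ≤ finrank K W) : ∃ π : W →ₗ[K] V, Function.Surjective π := by
  obtain ⟨ι, hι⟩ := finrank_le_iff_exists_linearMap.mp h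
  obtain ⟨π, hπι⟩ := ι.exists_leftInverse_of_injective (LinearMap.ker_eq_bot.2 hι)
  exact ⟨π, fun v => ⟨ι v, LinearMap.congr_fun hπι v⟩⟩

theorem addHaar_range_eq_zero_of_finrank_lt {E F : Type*}
    [NormedAddCommGroup E] [NormedSpace ℝ E] [FiniteDimensional ℝ E]
    [NormedAddCommGroup F] [NormedSpace ℝ F] [FiniteDimensional ℝ F]
    [MeasurableSpace F] [BorelSpace F] (μ : Measure F) [μ.IsAddHaarMeasure]
    {f : E → F} (hf : Differentiable ℝ f) (hdim : finrank ℝ E < finrank ℝ F) :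
    μ (range f) = 0 := by
  -- precompose with a linear surjection `F → E`: the range is unchanged, and the new map
  -- is a self-map of `F` whose derivative factors through `E`, so has zero determinant
  obtain ⟨π, hπ⟩ := LinearMap.exists_surjective_of_finrank_le hdim.le
  let πL : F →L[ℝ] E := π.toContinuousLinearMap
  have hker : LinearMap.ker π ≠ ⊥ := fun h =>
    hdim.not_ge (LinearMap.finrank_le_finrank_of_injective (LinearMap.ker_eq_bot.1 h))
  have hrange : range f = (f ∘ πL) '' univ := by
    rw [image_univ, range_comp, show range πL = univ from hπ.range_eq, image_univ]
  rw [hrange]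
  refine addHaar_image_eq_zero_of_det_fderivWithin_eq_zero μ
    (f' := fun x => (fderiv ℝ f (πL x)).comp πL)
    (fun x _ => ((hf (πL x)).hasFDerivAt.comp x πL.hasFDerivAt).hasFDerivWithinAt)
    (fun x _ => LinearMap.det_eq_zero_iff_ker_ne_bot.2 ?_)
  exact ne_bot_of_le_ne_bot hker (LinearMap.ker_le_ker_comp π _)

section Spiky

variable {F m n : Type*} [Field F]

theorem IsBlocky.eq_zero_or_eq_one {B : Matrix m n F} (hB : IsBlocky B) (i : m) (j : n) :
    B i j = 0 ∨ B i j = 1 := by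
  obtain ⟨k, S, T, -, -, h1, h0⟩ := hB
  by_cases h : ∃ l, i ∈ S l ∧ j ∈ T l
  · exact Or.inr (h1 i j h)
  · exact Or.inl (h0 i j h)

theorem isBlocky_const_one [Fintype m] [Fintype n] :
    IsBlocky (of fun (_ : m) (_ : n) => (1 : F)) :=
  ⟨1, fun _ => Finset.univ, fun _ => Finset.univ, fun a b h => (h (Subsingleton.elim a b)).elim,
    fun a b h => (h (Subsingleton.elim a b)).elim, fun _ _ _ => rfl,
    fun i j h => (h ⟨0, Finset.mem_univ i, Finset.mem_univ j⟩).elim⟩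

theorem isSpiky_vecMulVec [Fintype m] [Fintype n] (u : m → F) (v : n → F) :
    IsSpiky (vecMulVec u v) :=
  ⟨_, u, v, isBlocky_const_one, fun i j => by simp [vecMulVec_apply]⟩

theorem exists_spiky_sum_eq [Fintype n] {k : ℕ} (M : Matrix (Fin k) n F) :
    ∃ f : Fin k → Matrix (Fin k) n F, (∀ i, IsSpiky (f i)) ∧ ∑ i, f i = M := by
  refine ⟨fun i => vecMulVec (Pi.single i 1) (M i), fun i => isSpiky_vecMulVec _ _, ?_⟩
  ext a b
  simp [Matrix.sum_apply, vecMulVec_apply, Pi.single_apply]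

theorem exists_spiky_sum_eq_spikyRank [Fintype n] {k : ℕ} (M : Matrix (Fin k) n F) :
    ∃ f : Fin (spikyRank M) → Matrix (Fin k) n F, (∀ i, IsSpiky (f i)) ∧ ∑ i, f i = M :=
  Nat.sInf_mem (s := {r | ∃ f : Fin r → Matrix (Fin k) n F, (∀ i, IsSpiky (f i)) ∧ ∑ i, f i = M})
    ⟨k, exists_spiky_sum_eq M⟩

end Spiky

section SpikyMap

variable {m n : Type*} {r : ℕ}

/-- Sums of `r` spiky matrices with fixed supports `P l`, parametrised by the rank-one factors. -/
noncomputable def spikyMap (P : Fin r → m → n → Bool) (w : Fin r → (m → ℝ) × (n → ℝ)) :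
    m → n → ℝ :=
  fun i j => ∑ l, if P l i j then (w l).1 i * (w l).2 j else 0

theorem differentiable_spikyMap [Fintype m] [Fintype n] (P : Fin r → m → n → Bool) :
    Differentiable ℝ (spikyMap P) := by
  refine differentiable_pi.2 fun i => differentiable_pi.2 fun j => ?_
  refine Differentiable.fun_sum fun l _ => ?_
  split_ifs <;> fun_prop

theorem volume_range_spikyMap [Fintype m] [Fintype n]
    (hr : r * (Fintype.card m + Fintype.card n) < Fintype.card m * Fintype.card n)
    (P : Fin r → m → n → Bool) : volume (range (spikyMap P)) = 0 :=
  addHaar_range_eq_zero_of_finrank_lt volume (differentiable_spikyMap P)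
    (by simpa [finrank_pi_fintype, finrank_prod] using hr)

theorem exists_mem_range_spikyMap {f : Fin r → Matrix m n ℝ}
    (hf : ∀ l, IsSpiky (f l)) {M : m → n → ℝ} (hM : ∑ l, f l = of M) :
    ∃ P : Fin r → m → n → Bool, M ∈ range (spikyMap P) := by
  choose B u v hB hBuv using hf
  refine ⟨fun l i j => decide (B l i j = 1), fun l => (u l, v l),
    funext fun i => funext fun j => ?_⟩
  rw [show M i j = ∑ l, f l i j by rw [← Matrix.sum_apply, hM, of_apply]]
  refine Finset.sum_congr rfl fun l _ => ?_
  rcases (hB l).eq_zero_or_eq_one i j with h | h <;> simp [hBuv, h]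

theorem volume_setOf_spikyRank_lt [Fintype n] {k : ℕ} :
    volume {M : Fin k → n → ℝ |
      spikyRank (of M) * (k + Fintype.card n) < k * Fintype.card n} = 0 := by
  have hsub : {M : Fin k → n → ℝ | spikyRank (of M) * (k + Fintype.card n) < k * Fintype.card n}
      ⊆ ⋃ (r : ℕ) (_ : r * (k + Fintype.card n) < k * Fintype.card n)
        (P : Fin r → Fin k → n → Bool), range (spikyMap P) := by
    intro M hM
    obtain ⟨f, hf, hsum⟩ := exists_spiky_sum_eq_spikyRank (of M)
    obtain ⟨P, hP⟩ := exists_mem_range_spikyMap hf hsum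
    exact mem_iUnion₂.2 ⟨_, hM, mem_iUnion.2 ⟨P, hP⟩⟩
  refine measure_mono_null hsub (measure_iUnion_null fun r => measure_iUnion_null fun hr =>
    measure_iUnion_null fun P => volume_range_spikyMap ?_ P)
  simpa using hr

end SpikyMap

/-- For any absolutely continuous probability distribution on N x N real matrices,
almost surely the spiky rank is at least N/2. -/
theorem spikyRank_ae_ge_half (N : ℕ) (μ : Measure (Fin N → Fin N → ℝ))
    [IsProbabilityMeasure μ] (hac : μ ≪ volume) :
    μ {M | (N : ℝ) / 2 ≤ (spikyRank (Matrix.of M) : ℝ)} = 1 := by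
  have hsub : {M : Fin N → Fin N → ℝ | (N : ℝ) / 2 ≤ spikyRank (of M)}ᶜ ⊆
      {M | spikyRank (of M) * (N + Fintype.card (Fin N)) < N * Fintype.card (Fin N)} := by
    intro M hM
    simp only [mem_compl_iff, mem_ofPred_eq, not_le, Fintype.card_fin] at hM ⊢
    have h2r : (2 * spikyRank (of M) : ℝ) < N := by linarith
    have h2r : 2 * spikyRank (of M) < N := by exact_mod_cast h2r
    nlinarith
  rw [measure_congr (ae_eq_univ.2 (hac (measure_mono_null hsub volume_setOf_spikyRank_lt))),
    measure_univ]
end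

section
/- Let L : {0,1}^n × {0,1}^n → ℝ be a ReLU gate, i.e., L(x,y) = max{0, ⟨w₁,x⟩ + ⟨w₂,y⟩ + α} for some w₁, w₂ ∈ ℝ^n and α ∈ ℝ. Then the spiky rank of the matrix L is at most 3n + 3. -/
open Matrix MeasureTheory

/-!
Rank the values of `a` on the finite set `X`: with `s = a '' X`, put `r x = #{v ∈ s | v ≤ a x}`
and `t y = #{v ∈ s | v ≤ -b y}`. Then `0 < a x + b y ↔ t y < r x`, with `r x ≤ #X ≤ 2 ^ N`, so the
support of the ReLU matrix is a "greater-than" matrix on numbers below `2 ^ (N + 1)`. Sorting the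
pairs `u < v` by the leading bit `k` in which `u` and `v` differ writes this support as a sum of
`N + 1` blocky matrices: on piece `k` the rows are labelled by `v / 2 ^ (k + 1)` and the columns by
`u / 2 ^ (k + 1)`. Multiplying each piece by the rank-two matrix `a x + b y = a x · 1 + 1 · b y`
gives `2 (N + 1)` spiky matrices.
-/

open Finset

/-- `k` is the most significant bit in which `u` and `v` differ, and `v` has a `1` there. -/
def IsLeadingDiffBit (k u v : ℕ) : Prop :=
  v / 2 ^ (k + 1) = u / 2 ^ (k + 1) ∧ v / 2 ^ k % 2 = 1 ∧ u / 2 ^ k % 2 = 0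

instance (k u v : ℕ) : Decidable (IsLeadingDiffBit k u v) := by
  unfold IsLeadingDiffBit; infer_instance

theorem isLeadingDiffBit_succ {k u v : ℕ} :
    IsLeadingDiffBit (k + 1) u v ↔ IsLeadingDiffBit k (u / 2) (v / 2) := by
  simp only [IsLeadingDiffBit, Nat.div_div_eq_div_mul, ← pow_succ']

theorem ite_lt_eq_sum_ite_isLeadingDiffBit {R : Type*} [AddCommMonoidWithOne R] :
    ∀ {m u v : ℕ}, v < 2 ^ m →
      (if u < v then 1 else 0 : R) = ∑ k ∈ range m, if IsLeadingDiffBit k u v then 1 else 0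
  | 0, u, v, hv => by simp [show v = 0 by simpa using hv]
  | m + 1, u, v, hv => by
    have hv2 : v / 2 < 2 ^ m := by rw [pow_succ] at hv; omega
    simp only [sum_range_succ', isLeadingDiffBit_succ]
    rw [← ite_lt_eq_sum_ite_isLeadingDiffBit hv2]
    simp only [IsLeadingDiffBit, zero_add, pow_zero, pow_one, Nat.div_one]
    split_ifs <;> first | (exfalso; omega) | simp

theorem lt_iff_card_filter_le_lt {α : Type*} [LinearOrder α] {s : Finset α} {a : α} (ha : a ∈ s)
    (c : α) : c < a ↔ #{v ∈ s | v ≤ c} < #{v ∈ s | v ≤ a} := by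
  refine ⟨fun hca => card_lt_card ?_, fun hlt => ?_⟩
  · exact (ssubset_iff_of_subset (monotone_filter_right s fun _ _ hv => hv.trans hca.le)).2
      ⟨a, by simp [ha], by simp [hca]⟩
  · by_contra! hac
    exact hlt.not_ge (card_le_card (monotone_filter_right s fun _ _ hv => hv.trans hac))

section Spiky

variable {F : Type*} [Field F] {X Y : Type*}

theorem isBlocky_of_labels [Fintype X] [Fintype Y] (f : X → ℕ) (g : Y → ℕ) (p : X → Prop)
    (q : Y → Prop) [DecidablePred p] [DecidablePred q] (M : Matrix X Y F)
    (hM : ∀ x y, M x y = if f x = g y ∧ p x ∧ q y then 1 else 0) : IsBlocky M := by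
  refine ⟨univ.sup f + 1, fun l => {x | f x = l ∧ p x}, fun l => {y | g y = l ∧ q y},
    ?_, ?_, ?_, ?_⟩
  · intro a b hab
    simp only [disjoint_left, mem_filter, mem_univ, true_and]
    exact fun x hxa hxb => hab (Fin.ext (hxa.1.symm.trans hxb.1))
  · intro a b hab
    simp only [disjoint_left, mem_filter, mem_univ, true_and]
    exact fun y hya hyb => hab (Fin.ext (hya.1.symm.trans hyb.1))
  · rintro x y ⟨l, hx, hy⟩
    simp only [mem_filter, mem_univ, true_and] at hx hy
    simp [hM, hx.1.trans hy.1.symm, hx.2, hy.2]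
  · intro x y h
    rw [hM, if_neg]
    rintro ⟨hfg, hp, hq⟩
    exact h ⟨⟨f x, Nat.lt_succ_of_le (le_sup (mem_univ x))⟩, by simp [hp], by simp [hfg, hq]⟩

theorem spikyRank_le_card {ι : Type*} [Fintype ι] (M : Matrix X Y F) (f : ι → Matrix X Y F)
    (hf : ∀ i, IsSpiky (f i)) (hM : ∑ i, f i = M) : spikyRank M ≤ Fintype.card ι := by
  let e := Fintype.equivFin ι
  exact Nat.sInf_le ⟨fun j => f (e.symm j), fun j => hf _, by rw [e.symm.sum_comp, hM]⟩

theorem spikyRank_sum_mul_add_le {ι : Type*} [Fintype ι] (B : ι → Matrix X Y F)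
    (hB : ∀ i, IsBlocky (B i)) (u : X → F) (v : Y → F) :
    spikyRank (of fun x y => (∑ i, B i x y) * (u x + v y)) ≤ 2 * Fintype.card ι := by
  have hcard : Fintype.card (ι ⊕ ι) = 2 * Fintype.card ι := by simp [two_mul]
  rw [← hcard]
  refine spikyRank_le_card _ (Sum.elim (fun i => of fun x y => B i x y * (u x * 1))
    (fun i => of fun x y => B i x y * (1 * v y))) ?_ ?_
  · rintro (i | i)
    exacts [⟨B i, u, 1, hB i, fun _ _ => rfl⟩, ⟨B i, 1, v, hB i, fun _ _ => rfl⟩]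
  · ext x y
    simp [Fintype.sum_sum_type, Matrix.sum_apply, sum_mul, mul_add]

end Spiky

theorem spikyRank_max_zero_add_le {F : Type*} [Field F] [LinearOrder F] [IsStrictOrderedRing F]
    {X Y : Type*} [Fintype X] [Fintype Y] {N : ℕ}
    (hX : Fintype.card X ≤ 2 ^ N) (a : X → F) (b : Y → F) :
    spikyRank (of fun x y => max 0 (a x + b y)) ≤ 2 * (N + 1) := by
  classical
  let s : Finset F := univ.image a
  let r : X → ℕ := fun x => #{v ∈ s | v ≤ a x}
  let t : Y → ℕ := fun y => #{v ∈ s | v ≤ -b y}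
  have hr : ∀ x, r x < 2 ^ (N + 1) := fun x =>
    calc r x ≤ #s := card_filter_le _ _
      _ ≤ Fintype.card X := card_image_le
      _ < 2 ^ (N + 1) := hX.trans_lt (Nat.pow_lt_pow_right one_lt_two N.lt_succ_self)
  have hsupp : ∀ x y, 0 < a x + b y ↔ t y < r x := fun x y => by
    rw [← lt_iff_card_filter_le_lt (mem_image_of_mem a (mem_univ x)), neg_lt_iff_pos_add]
  let B : Fin (N + 1) → Matrix X Y F := fun k =>
    of fun x y => if IsLeadingDiffBit k (t y) (r x) then 1 else 0
  have hB : ∀ k : Fin (N + 1), IsBlocky (B k) := fun ⟨k, _⟩ =>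
    isBlocky_of_labels (fun x => r x / 2 ^ (k + 1)) (fun y => t y / 2 ^ (k + 1))
      (fun x => r x / 2 ^ k % 2 = 1) (fun y => t y / 2 ^ k % 2 = 0) _ fun _ _ => rfl
  calc _ = spikyRank (of fun x y => (∑ k, B k x y) * (a x + b y)) := by
        congr 1; ext x y
        simp only [of_apply, B, Fin.sum_univ_eq_sum_range
          (fun k => if IsLeadingDiffBit k (t y) (r x) then (1 : F) else 0),
          ← ite_lt_eq_sum_ite_isLeadingDiffBit (hr x), ← hsupp]
        split_ifs with h
        exacts [by simp [h.le], by simp [not_lt.1 h]]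
    _ ≤ 2 * Fintype.card (Fin (N + 1)) := spikyRank_sum_mul_add_le B hB a b
    _ = 2 * (N + 1) := by rw [Fintype.card_fin]

/-- A ReLU gate, viewed as a 2^n x 2^n matrix, has spiky rank at most 3n + 3. -/
theorem spikyRank_relu_le (n : ℕ) (w₁ w₂ : Fin n → ℝ) (α : ℝ) :
    spikyRank (Matrix.of fun x y : Fin n → Bool =>
      max 0 (∑ i, w₁ i * (if x i then (1 : ℝ) else 0) +
             ∑ i, w₂ i * (if y i then (1 : ℝ) else 0) + α)) ≤ 3 * n + 3 := by
  have h := spikyRank_max_zero_add_le (N := n) (by simp)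
    (fun x : Fin n → Bool => ∑ i, w₁ i * if x i then (1 : ℝ) else 0)
    (fun y : Fin n → Bool => ∑ i, w₂ i * (if y i then (1 : ℝ) else 0) + α)
  simp only [← add_assoc] at h
  omega
end
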